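/- Let B be a real p×q matrix with p ≥ q, and let n ≥ 1. Let M be the (p+q)-square block matrix [[0, n·B],[Bᵀ, (n−1)·I_q]]. Then for every λ ∈ ℝ, det(λ·I_{p+q} − M) = λ^{p−q} · det((λ² − (n−1)λ)·I_q − n·(BᵀB)). -/

import Mathlib

/-!
Right-multiplying `fromBlocks (a • 1) C D E` by `fromBlocks 1 (-C) 0 (a • 1)` makes it block
triangular with diagonal blocks `a • 1` and the Schur-type complement `a • E - D * C`, so
`det · a ^ q = a ^ p · det (a • E - D * C)` over any commutative ring. Cancelling `a ^ q` gives the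
identity for `a ≠ 0`, and continuity in `a` extends it to `a = 0`. For the theorem,
`a = λ`, `C = -n • B`, `D = -Bᵀ` and `E = λ • 1 - (n - 1) • 1`.
-/

open Matrix Topology

section CommRing

variable {R : Type*} [CommRing R] {m n : Type*} [Fintype m] [Fintype n] [DecidableEq m]
  [DecidableEq n]

theorem det_fromBlocks_smul_one_mul_pow (a : R) (C : Matrix m n R) (D : Matrix n m R)
    (E : Matrix n n R) :
    (fromBlocks (a • 1) C D E).det * a ^ Fintype.card n =
      a ^ Fintype.card m * (a • E - D * C).det := by
  have hfactor : fromBlocks (a • 1) C D E * fromBlocks 1 (-C) 0 (a • 1) =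
      fromBlocks (a • 1) 0 D (a • E - D * C) := by
    rw [fromBlocks_multiply]
    congr 1 <;> simp [sub_eq_neg_add]
  simpa only [det_mul, det_fromBlocks_zero₂₁, det_fromBlocks_zero₁₂, det_one, one_mul,
    det_smul, mul_one] using congrArg det hfactor

theorem det_fromBlocks_smul_one_of_ne_zero [IsDomain R] {a : R} (ha : a ≠ 0)
    (hmn : Fintype.card n ≤ Fintype.card m) (C : Matrix m n R) (D : Matrix n m R)
    (E : Matrix n n R) :
    (fromBlocks (a • 1) C D E).det =
      a ^ (Fintype.card m - Fintype.card n) * (a • E - D * C).det := by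
  refine mul_right_cancel₀ (pow_ne_zero (Fintype.card n) ha) ?_
  rw [det_fromBlocks_smul_one_mul_pow, mul_right_comm, ← pow_add, Nat.sub_add_cancel hmn]

end CommRing

theorem det_fromBlocks_smul_one {𝕜 : Type*} [Field 𝕜] [TopologicalSpace 𝕜]
    [IsTopologicalRing 𝕜] [T2Space 𝕜] [(𝓝[≠] (0 : 𝕜)).NeBot]
    {m n : Type*} [Fintype m] [Fintype n] [DecidableEq m] [DecidableEq n]
    (hmn : Fintype.card n ≤ Fintype.card m) (a : 𝕜) (C : Matrix m n 𝕜) (D : Matrix n m 𝕜)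
    (E : Matrix n n 𝕜) :
    (fromBlocks (a • 1) C D E).det =
      a ^ (Fintype.card m - Fintype.card n) * (a • E - D * C).det := by
  refine congrFun (Continuous.ext_on (dense_compl_singleton 0) ?_ ?_
    fun x hx => det_fromBlocks_smul_one_of_ne_zero hx hmn C D E) a
  · exact (Continuous.matrix_fromBlocks (continuous_id.smul continuous_const) continuous_const
      continuous_const continuous_const).matrix_det
  · exact (continuous_pow _).mul ((continuous_id.smul continuous_const).sub
      continuous_const).matrix_det

theorem schur_det_C (p q n : ℕ) (hpq : q ≤ p)
    (B : Matrix (Fin p) (Fin q) ℝ) (l : ℝ) :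
    (l • (1 : Matrix (Fin p ⊕ Fin q) (Fin p ⊕ Fin q) ℝ) -
        Matrix.fromBlocks 0 ((n : ℝ) • B) Bᵀ (((n : ℝ) - 1) • 1)).det =
      l ^ (p - q) *
        ((l ^ 2 - ((n : ℝ) - 1) * l) • (1 : Matrix (Fin q) (Fin q) ℝ) -
          (n : ℝ) • (Bᵀ * B)).det := by
  have hblocks : l • (1 : Matrix (Fin p ⊕ Fin q) (Fin p ⊕ Fin q) ℝ) -
      fromBlocks 0 ((n : ℝ) • B) Bᵀ (((n : ℝ) - 1) • 1) =
      fromBlocks (l • 1) (-((n : ℝ) • B)) (-Bᵀ) (l • 1 - ((n : ℝ) - 1) • 1) := by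
    rw [← fromBlocks_one, fromBlocks_smul, sub_eq_add_neg, fromBlocks_neg, fromBlocks_add]
    simp only [smul_zero, neg_zero, add_zero, zero_add, sub_eq_add_neg]
  have hschur : l • (l • 1 - ((n : ℝ) - 1) • 1) - -Bᵀ * -((n : ℝ) • B) =
      (l ^ 2 - ((n : ℝ) - 1) * l) • (1 : Matrix (Fin q) (Fin q) ℝ) - (n : ℝ) • (Bᵀ * B) := by
    rw [Matrix.neg_mul, Matrix.mul_neg, neg_neg, Matrix.mul_smul, smul_sub, smul_smul, smul_smul,
      sub_smul, sq, mul_comm l (_ - 1)]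
  rw [hblocks, det_fromBlocks_smul_one (by simpa using hpq), hschur, Fintype.card_fin,
    Fintype.card_fin]
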